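/- Let Ω ⊆ M_nc be a similarity invariant right admissible nc set and f : Ω → N_nc a nc function. Then for all n, m ≥ 1, X ∈ Ω_n, Y ∈ Ω_m and S ∈ R^{m×n}, one has S f(X) − f(Y) S = Δ_R f(Y, X)(S X − Y S); equivalently, f([[Y, SX − YS],[0, X]]) = [[f(Y), S f(X) − f(Y) S],[0, f(X)]]. -/
import Mathlib


open Matrix

/-- Product of a scalar matrix with a matrix over a module. -/
def scalMul {R : Type*} [CommRing R] {M : Type*} [AddCommGroup M] [Module R M]
    {p n m : ℕ} (S : Matrix (Fin p) (Fin n) R) (X : Matrix (Fin n) (Fin m) M) :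
    Matrix (Fin p) (Fin m) M :=
  Matrix.of fun i j => ∑ k, S i k • X k j

/-- Product of a matrix over a module with a scalar matrix. -/
def mulScal {R : Type*} [CommRing R] {M : Type*} [AddCommGroup M] [Module R M]
    {n m q : ℕ} (X : Matrix (Fin n) (Fin m) M) (T : Matrix (Fin m) (Fin q) R) :
    Matrix (Fin n) (Fin q) M :=
  Matrix.of fun i j => ∑ k, T k j • X i k

/-- Direct sum of two square matrices over a module. -/
def dSum {M : Type*} [AddCommGroup M] {n m : ℕ}
    (X : Matrix (Fin n) (Fin n) M) (Y : Matrix (Fin m) (Fin m) M) :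
    Matrix (Fin (n + m)) (Fin (n + m)) M :=
  (Matrix.reindex finSumFinEquiv finSumFinEquiv) (Matrix.fromBlocks X 0 0 Y)

/-- Block upper triangular 2×2 block matrix `[[X, Z],[0, Y]]`. -/
def upTri {M : Type*} [AddCommGroup M] {n m : ℕ}
    (X : Matrix (Fin n) (Fin n) M) (Z : Matrix (Fin n) (Fin m) M)
    (Y : Matrix (Fin m) (Fin m) M) :
    Matrix (Fin (n + m)) (Fin (n + m)) M :=
  (Matrix.reindex finSumFinEquiv finSumFinEquiv) (Matrix.fromBlocks X Z 0 Y)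

/-- A noncommutative (nc) set: closed under direct sums. -/
def IsNCSet {M : Type*} [AddCommGroup M]
    (Ω : ∀ n : ℕ, Set (Matrix (Fin n) (Fin n) M)) : Prop :=
  ∀ (n m : ℕ) (X : Matrix (Fin n) (Fin n) M) (Y : Matrix (Fin m) (Fin m) M),
    X ∈ Ω n → Y ∈ Ω m → dSum X Y ∈ Ω (n + m)

/-- `f` respects direct sums on `Ω`. -/
def RespectsDirSums {M N : Type*} [AddCommGroup M] [AddCommGroup N]
    (Ω : ∀ n : ℕ, Set (Matrix (Fin n) (Fin n) M))
    (f : ∀ n : ℕ, Matrix (Fin n) (Fin n) M → Matrix (Fin n) (Fin n) N) : Prop :=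
  ∀ (n m : ℕ) (X : Matrix (Fin n) (Fin n) M) (Y : Matrix (Fin m) (Fin m) M),
    X ∈ Ω n → Y ∈ Ω m → f (n + m) (dSum X Y) = dSum (f n X) (f m Y)

/-- `f` respects similarities on `Ω`. -/
def RespectsSim (R : Type*) [CommRing R] {M N : Type*} [AddCommGroup M] [Module R M]
    [AddCommGroup N] [Module R N]
    (Ω : ∀ n : ℕ, Set (Matrix (Fin n) (Fin n) M))
    (f : ∀ n : ℕ, Matrix (Fin n) (Fin n) M → Matrix (Fin n) (Fin n) N) : Prop :=
  ∀ (n : ℕ) (X : Matrix (Fin n) (Fin n) M) (S T : Matrix (Fin n) (Fin n) R),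
    X ∈ Ω n → S * T = 1 → T * S = 1 → scalMul S (mulScal X T) ∈ Ω n →
    f n (scalMul S (mulScal X T)) = scalMul S (mulScal (f n X) T)

/-- `f` respects intertwining on `Ω`: `X T = T Y` implies `f(X) T = T f(Y)`. -/
def RespectsIntertwining (R : Type*) [CommRing R] {M N : Type*} [AddCommGroup M]
    [Module R M] [AddCommGroup N] [Module R N]
    (Ω : ∀ n : ℕ, Set (Matrix (Fin n) (Fin n) M))
    (f : ∀ n : ℕ, Matrix (Fin n) (Fin n) M → Matrix (Fin n) (Fin n) N) : Prop :=
  ∀ (n m : ℕ) (X : Matrix (Fin n) (Fin n) M) (Y : Matrix (Fin m) (Fin m) M)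
    (T : Matrix (Fin n) (Fin m) R),
    X ∈ Ω n → Y ∈ Ω m → mulScal X T = scalMul T Y →
    mulScal (f n X) T = scalMul T (f m Y)

/-- The (1,1) block of an `(n+m)×(n+m)` matrix. -/
def blk11 {N : Type*} {n m : ℕ} (W : Matrix (Fin (n + m)) (Fin (n + m)) N) :
    Matrix (Fin n) (Fin n) N :=
  Matrix.toBlocks₁₁ ((Matrix.reindex finSumFinEquiv.symm finSumFinEquiv.symm) W)

/-- The (1,2) block of an `(n+m)×(n+m)` matrix. -/
def blk12 {N : Type*} {n m : ℕ} (W : Matrix (Fin (n + m)) (Fin (n + m)) N) :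
    Matrix (Fin n) (Fin m) N :=
  Matrix.toBlocks₁₂ ((Matrix.reindex finSumFinEquiv.symm finSumFinEquiv.symm) W)

/-- The (2,1) block of an `(n+m)×(n+m)` matrix. -/
def blk21 {N : Type*} {n m : ℕ} (W : Matrix (Fin (n + m)) (Fin (n + m)) N) :
    Matrix (Fin m) (Fin n) N :=
  Matrix.toBlocks₂₁ ((Matrix.reindex finSumFinEquiv.symm finSumFinEquiv.symm) W)

/-- The (2,2) block of an `(n+m)×(n+m)` matrix. -/
def blk22 {N : Type*} {n m : ℕ} (W : Matrix (Fin (n + m)) (Fin (n + m)) N) :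
    Matrix (Fin m) (Fin m) N :=
  Matrix.toBlocks₂₂ ((Matrix.reindex finSumFinEquiv.symm finSumFinEquiv.symm) W)

/-- `Ω` is invariant under similarities. -/
def SimInvariant (R : Type*) [CommRing R] {M : Type*} [AddCommGroup M] [Module R M]
    (Ω : ∀ n : ℕ, Set (Matrix (Fin n) (Fin n) M)) : Prop :=
  ∀ (n : ℕ) (X : Matrix (Fin n) (Fin n) M) (S T : Matrix (Fin n) (Fin n) R),
    X ∈ Ω n → S * T = 1 → T * S = 1 → scalMul S (mulScal X T) ∈ Ω n

/-- `Ω` is a right admissible nc set. -/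
def RightAdmissible (R : Type*) [CommRing R] {M : Type*} [AddCommGroup M] [Module R M]
    (Ω : ∀ n : ℕ, Set (Matrix (Fin n) (Fin n) M)) : Prop :=
  ∀ (n m : ℕ) (X : Matrix (Fin n) (Fin n) M) (Y : Matrix (Fin m) (Fin m) M)
    (Z : Matrix (Fin n) (Fin m) M), X ∈ Ω n → Y ∈ Ω m →
    ∃ r : Rˣ, upTri X ((r : R) • Z) Y ∈ Ω (n + m)

section Aux

variable {R : Type*} [CommRing R] {M : Type*} [AddCommGroup M] [Module R M]

/-- General-index version of `scalMul`. -/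
def sMul' {p n m : Type*} [Fintype n] (S : Matrix p n R) (X : Matrix n m M) :
    Matrix p m M :=
  Matrix.of fun i j => ∑ k, S i k • X k j

/-- General-index version of `mulScal`. -/
def mScal' {n m q : Type*} [Fintype m] (X : Matrix n m M) (T : Matrix m q R) :
    Matrix n q M :=
  Matrix.of fun i j => ∑ k, T k j • X i k

lemma scalMul_eq_sMul' {p n m : ℕ} (S : Matrix (Fin p) (Fin n) R)
    (X : Matrix (Fin n) (Fin m) M) : scalMul S X = sMul' S X := rfl

lemma mulScal_eq_mScal' {n m q : ℕ} (X : Matrix (Fin n) (Fin m) M)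
    (T : Matrix (Fin m) (Fin q) R) : mulScal X T = mScal' X T := rfl

lemma sMul'_reindex {p n m p' n' m' : Type*} [Fintype n] [Fintype n']
    (e1 : p ≃ p') (e2 : n ≃ n') (e3 : m ≃ m')
    (S : Matrix p n R) (X : Matrix n m M) :
    sMul' (Matrix.reindex e1 e2 S) (Matrix.reindex e2 e3 X)
      = Matrix.reindex e1 e3 (sMul' S X) := by
  ext i j
  simp only [sMul', Matrix.reindex_apply, Matrix.submatrix_apply, Matrix.of_apply]
  exact Equiv.sum_comp e2.symm (fun k => S (e1.symm i) k • X k (e3.symm j))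

lemma mScal'_reindex {n m q n' m' q' : Type*} [Fintype m] [Fintype m']
    (e1 : n ≃ n') (e2 : m ≃ m') (e3 : q ≃ q')
    (X : Matrix n m M) (T : Matrix m q R) :
    mScal' (Matrix.reindex e1 e2 X) (Matrix.reindex e2 e3 T)
      = Matrix.reindex e1 e3 (mScal' X T) := by
  ext i j
  simp only [mScal', Matrix.reindex_apply, Matrix.submatrix_apply, Matrix.of_apply]
  exact Equiv.sum_comp e2.symm (fun k => T k (e3.symm j) • X (e1.symm i) k)

lemma sMul'_fromBlocks {p1 p2 n1 n2 m1 m2 : Type*} [Fintype n1] [Fintype n2]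
    (A : Matrix p1 n1 R) (B : Matrix p1 n2 R) (C : Matrix p2 n1 R) (D : Matrix p2 n2 R)
    (P : Matrix n1 m1 M) (Q : Matrix n1 m2 M) (U : Matrix n2 m1 M) (V : Matrix n2 m2 M) :
    sMul' (Matrix.fromBlocks A B C D) (Matrix.fromBlocks P Q U V)
      = Matrix.fromBlocks (sMul' A P + sMul' B U) (sMul' A Q + sMul' B V)
          (sMul' C P + sMul' D U) (sMul' C Q + sMul' D V) := by
  ext i j
  cases i <;> cases j <;>
    simp [sMul', Matrix.fromBlocks, Fintype.sum_sum_type]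

lemma mScal'_fromBlocks {p1 p2 n1 n2 m1 m2 : Type*} [Fintype n1] [Fintype n2]
    (A : Matrix p1 n1 M) (B : Matrix p1 n2 M) (C : Matrix p2 n1 M) (D : Matrix p2 n2 M)
    (P : Matrix n1 m1 R) (Q : Matrix n1 m2 R) (U : Matrix n2 m1 R) (V : Matrix n2 m2 R) :
    mScal' (Matrix.fromBlocks A B C D) (Matrix.fromBlocks P Q U V)
      = Matrix.fromBlocks (mScal' A P + mScal' B U) (mScal' A Q + mScal' B V)
          (mScal' C P + mScal' D U) (mScal' C Q + mScal' D V) := by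
  ext i j
  cases i <;> cases j <;>
    simp [mScal', Matrix.fromBlocks, Fintype.sum_sum_type]

lemma sMul'_one {n m : Type*} [Fintype n] [DecidableEq n] (X : Matrix n m M) :
    sMul' (1 : Matrix n n R) X = X := by
  ext i j
  simp [sMul', Matrix.one_apply, ite_smul]

lemma mScal'_one {n m : Type*} [Fintype m] [DecidableEq m] (X : Matrix n m M) :
    mScal' X (1 : Matrix m m R) = X := by
  ext i j
  simp [mScal', Matrix.one_apply, ite_smul]

@[simp] lemma sMul'_zero_left {p n m : Type*} [Fintype n] (X : Matrix n m M) :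
    sMul' (0 : Matrix p n R) X = 0 := by
  ext i j; simp [sMul']

@[simp] lemma sMul'_zero_right {p n m : Type*} [Fintype n] (S : Matrix p n R) :
    sMul' S (0 : Matrix n m M) = 0 := by
  ext i j; simp [sMul']

@[simp] lemma mScal'_zero_left {n m q : Type*} [Fintype m] (T : Matrix m q R) :
    mScal' (0 : Matrix n m M) T = 0 := by
  ext i j; simp [mScal']

@[simp] lemma mScal'_zero_right {n m q : Type*} [Fintype m] (X : Matrix n m M) :
    mScal' X (0 : Matrix m q R) = 0 := by
  ext i j; simp [mScal']

lemma sMul'_neg {p n m : Type*} [Fintype n] (S : Matrix p n R) (X : Matrix n m M) :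
    sMul' (-S) X = -(sMul' S X) := by
  ext i j; simp [sMul']

lemma mScal'_neg {n m q : Type*} [Fintype m] (X : Matrix n m M) (T : Matrix m q R) :
    mScal' X (-T) = -(mScal' X T) := by
  ext i j; simp [mScal']

lemma blk12_upTri {n m : ℕ} (A : Matrix (Fin n) (Fin n) M)
    (Z : Matrix (Fin n) (Fin m) M) (B : Matrix (Fin m) (Fin m) M) :
    blk12 (upTri A Z B) = Z := by
  simp [blk12, upTri, Matrix.toBlocks₁₂]
  rfl


lemma conj_dSum {R : Type*} [CommRing R] {M : Type*} [AddCommGroup M] [Module R M]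
    {m n : ℕ} (S : Matrix (Fin m) (Fin n) R)
    (A : Matrix (Fin m) (Fin m) M) (B : Matrix (Fin n) (Fin n) M) :
    scalMul (Matrix.reindex finSumFinEquiv finSumFinEquiv
        (Matrix.fromBlocks 1 S 0 1))
      (mulScal (dSum A B)
        (Matrix.reindex finSumFinEquiv finSumFinEquiv (Matrix.fromBlocks 1 (-S) 0 1)))
      = upTri A (scalMul S B - mulScal A S) B := by
  rw [scalMul_eq_sMul', mulScal_eq_mScal', dSum, upTri, mScal'_reindex, sMul'_reindex]
  congr 1
  rw [mScal'_fromBlocks, sMul'_fromBlocks]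
  simp [sMul'_one, mScal'_one, mScal'_neg, scalMul_eq_sMul', mulScal_eq_mScal',
    sub_eq_neg_add]

lemma blocks_mul_one {R : Type*} [CommRing R] {m n : ℕ} (S : Matrix (Fin m) (Fin n) R) :
    (Matrix.reindex finSumFinEquiv finSumFinEquiv
        (Matrix.fromBlocks 1 S 0 1) : Matrix (Fin (m + n)) (Fin (m + n)) R) *
      Matrix.reindex finSumFinEquiv finSumFinEquiv (Matrix.fromBlocks 1 (-S) 0 1) = 1 := by
  rw [Matrix.reindex_apply, Matrix.reindex_apply, Matrix.submatrix_mul_equiv,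
    Matrix.fromBlocks_multiply]
  simp [Matrix.fromBlocks_one, Matrix.submatrix_one_equiv]

lemma blocks_mul_one' {R : Type*} [CommRing R] {m n : ℕ} (S : Matrix (Fin m) (Fin n) R) :
    (Matrix.reindex finSumFinEquiv finSumFinEquiv
        (Matrix.fromBlocks 1 (-S) 0 1) : Matrix (Fin (m + n)) (Fin (m + n)) R) *
      Matrix.reindex finSumFinEquiv finSumFinEquiv (Matrix.fromBlocks 1 S 0 1) = 1 := by
  rw [Matrix.reindex_apply, Matrix.reindex_apply, Matrix.submatrix_mul_equiv,
    Matrix.fromBlocks_multiply]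
  simp [Matrix.fromBlocks_one, Matrix.submatrix_one_equiv]

end Aux

/-- First order difference formula: for a nc function `f` on a similarity
invariant right admissible nc set `Ω`, and `X ∈ Ω_n`, `Y ∈ Ω_m`, `S ∈ R^{m×n}`,
`S f(X) − f(Y) S = Δ_R f(Y, X)(S X − Y S)`; equivalently
`f([[Y, SX − YS],[0, X]]) = [[f(Y), S f(X) − f(Y) S],[0, f(X)]]`. -/
theorem nc_first_order_difference_formula
    {R : Type*} [CommRing R] {M : Type*} [AddCommGroup M] [Module R M]
    {N : Type*} [AddCommGroup N] [Module R N]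
    (Ω : ∀ n : ℕ, Set (Matrix (Fin n) (Fin n) M))
    (f : ∀ n : ℕ, Matrix (Fin n) (Fin n) M → Matrix (Fin n) (Fin n) N)
    (hΩ : IsNCSet Ω) (hsi : SimInvariant R Ω) (hra : RightAdmissible R Ω)
    (hds : RespectsDirSums Ω f) (hsim : RespectsSim R Ω f)
    {n m : ℕ} (X : Matrix (Fin n) (Fin n) M) (Y : Matrix (Fin m) (Fin m) M)
    (S : Matrix (Fin m) (Fin n) R) (hX : X ∈ Ω n) (hY : Y ∈ Ω m) :
    blk12 (f (m + n) (upTri Y (scalMul S X - mulScal Y S) X)) =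
        scalMul S (f n X) - mulScal (f m Y) S ∧
    f (m + n) (upTri Y (scalMul S X - mulScal Y S) X) =
      upTri (f m Y) (scalMul S (f n X) - mulScal (f m Y) S) (f n X) := by
  set Sm : Matrix (Fin (m + n)) (Fin (m + n)) R :=
    Matrix.reindex finSumFinEquiv finSumFinEquiv (Matrix.fromBlocks 1 S 0 1) with hSm
  set Tm : Matrix (Fin (m + n)) (Fin (m + n)) R :=
    Matrix.reindex finSumFinEquiv finSumFinEquiv (Matrix.fromBlocks 1 (-S) 0 1) with hTm
  have hST : Sm * Tm = 1 := blocks_mul_one S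
  have hTS : Tm * Sm = 1 := blocks_mul_one' S
  have hW : dSum Y X ∈ Ω (m + n) := hΩ m n Y X hY hX
  have key : scalMul Sm (mulScal (dSum Y X) Tm)
      = upTri Y (scalMul S X - mulScal Y S) X := conj_dSum S Y X
  have keyN : scalMul Sm (mulScal (dSum (f m Y) (f n X)) Tm)
      = upTri (f m Y) (scalMul S (f n X) - mulScal (f m Y) S) (f n X) :=
    conj_dSum S (f m Y) (f n X)
  have hmem : scalMul Sm (mulScal (dSum Y X) Tm) ∈ Ω (m + n) :=
    hsi (m + n) (dSum Y X) Sm Tm hW hST hTS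
  have hf := hsim (m + n) (dSum Y X) Sm Tm hW hST hTS hmem
  rw [hds m n Y X hY hX] at hf
  rw [key] at hf
  rw [keyN] at hf
  refine ⟨?_, hf⟩
  rw [hf, blk12_upTri]
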